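/- Let Ω = {(X,Y) ∈ S^n × S^n | X ⪰ 0, Y ⪯ 0, ⟨X,Y⟩ = 0} and fix (X,Y) ∈ Ω, (F,G) ∈ T_Ω(X,Y). Assume the characterizations: (X',Y') ∈ Ω iff Π_{S^n_+}(X'+Y') = X', and (F',G') ∈ T_Ω(X',Y') iff Π'_{S^n_+}(X'+Y'; F'+G') = F', and that Π_{S^n_+} is second-order directionally differentiable and globally Lipschitz. Then the outer second-order tangent set satisfies T²_Ω((X,Y);(F,G)) ⊆ {(S,T) | Π''_{S^n_+}(X+Y; F+G, S+T) = S}. -/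
import Mathlib


open Filter Topology

attribute [local instance] Matrix.normedAddCommGroup Matrix.normedSpace

/-- The (Bouligand) tangent cone to `S` at `x`, via sequences. -/
def tangentConeB {E : Type*} [NormedAddCommGroup E] [NormedSpace ℝ E]
    (S : Set E) (x : E) : Set E :=
  {d | ∃ (t : ℕ → ℝ) (dk : ℕ → E), (∀ k, 0 < t k) ∧ Tendsto t atTop (𝓝 0) ∧
    Tendsto dk atTop (𝓝 d) ∧ ∀ k, x + t k • dk k ∈ S}

/-- The outer second-order tangent set to `S` at `x` in direction `h`, via sequences:
`w` such that `x + t_k h + ½ t_k² w_k ∈ S` for some `t_k ↓ 0` and `w_k → w`. -/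
def outerSecondOrderTangentSet {E : Type*} [NormedAddCommGroup E] [NormedSpace ℝ E]
    (S : Set E) (x h : E) : Set E :=
  {w | ∃ (t : ℕ → ℝ) (wk : ℕ → E), (∀ k, 0 < t k) ∧ Tendsto t atTop (𝓝 0) ∧
    Tendsto wk atTop (𝓝 w) ∧ ∀ k, x + t k • h + ((t k) ^ 2 / 2) • wk k ∈ S}

/-- `D` is the (one-sided) directional derivative of `Φ` at `Z` in direction `H`. -/
def DirDerivAt {E : Type*} [NormedAddCommGroup E] [NormedSpace ℝ E]
    (Φ : E → E) (Z H D : E) : Prop :=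
  Tendsto (fun t : ℝ => t⁻¹ • (Φ (Z + t • H) - Φ Z)) (𝓝[>] 0) (𝓝 D)

/-- `D2` is the second-order (parabolic) directional derivative of `Φ` at `Z` in
directions `(H, W)`, relative to the first directional derivative map `DΦ`. -/
def SecondDirDerivAt {E : Type*} [NormedAddCommGroup E] [NormedSpace ℝ E]
    (Φ : E → E) (DΦ : E → E → E) (Z H W D2 : E) : Prop :=
  Tendsto (fun t : ℝ =>
      (t ^ 2 / 2)⁻¹ • (Φ (Z + t • H + (t ^ 2 / 2) • W) - Φ Z - t • DΦ Z H))
    (𝓝[>] 0) (𝓝 D2)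

/-- The SDCC set `Ω`. -/
def SDCCset (n : ℕ) : Set (Matrix (Fin n) (Fin n) ℝ × Matrix (Fin n) (Fin n) ℝ) :=
  {p | p.1.PosSemidef ∧ (-p.2).PosSemidef ∧ (p.1 * p.2).trace = 0}

/-- The outer second-order tangent set to `Ω` is contained in the set of `(S,T)` with
`Π''_{S^n_+}(X+Y; F+G, S+T) = S`, under the projection characterizations of `Ω` and
`T_Ω`, the Lipschitz continuity of `Π_{S^n_+}`, and its second-order directional
differentiability. -/
theorem outerSecondOrderTangentSet_SDCC_subset {n : ℕ}
    (Pi : Matrix (Fin n) (Fin n) ℝ → Matrix (Fin n) (Fin n) ℝ)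
    (DPi : Matrix (Fin n) (Fin n) ℝ → Matrix (Fin n) (Fin n) ℝ → Matrix (Fin n) (Fin n) ℝ)
    (D2Pi : Matrix (Fin n) (Fin n) ℝ → Matrix (Fin n) (Fin n) ℝ →
      Matrix (Fin n) (Fin n) ℝ → Matrix (Fin n) (Fin n) ℝ)
    -- membership characterization: `(X',Y') ∈ Ω ↔ Π_{S^n_+}(X'+Y') = X'`
    (hmem : ∀ X' Y' : Matrix (Fin n) (Fin n) ℝ, (X', Y') ∈ SDCCset n ↔ Pi (X' + Y') = X')
    -- tangent cone characterization: `(F',G') ∈ T_Ω(X',Y') ↔ Π'_{S^n_+}(X'+Y';F'+G') = F'`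
    (htan : ∀ X' Y' F' G' : Matrix (Fin n) (Fin n) ℝ, (X', Y') ∈ SDCCset n →
      ((F', G') ∈ tangentConeB (SDCCset n) (X', Y') ↔ DPi (X' + Y') (F' + G') = F'))
    -- global Lipschitz continuity of the projection
    (hlip : ∃ K : NNReal, LipschitzWith K Pi)
    -- first- and second-order directional differentiability of the projection
    (hDPi : ∀ Z H, DirDerivAt Pi Z H (DPi Z H))
    (hD2Pi : ∀ Z H W, SecondDirDerivAt Pi DPi Z H W (D2Pi Z H W))
    (X Y F G : Matrix (Fin n) (Fin n) ℝ)
    (hXY : (X, Y) ∈ SDCCset n) (hFG : (F, G) ∈ tangentConeB (SDCCset n) (X, Y)) :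
    outerSecondOrderTangentSet (SDCCset n) (X, Y) (F, G) ⊆
      {p : Matrix (Fin n) (Fin n) ℝ × Matrix (Fin n) (Fin n) ℝ |
        D2Pi (X + Y) (F + G) (p.1 + p.2) = p.1} := by
  rintro ⟨S, T⟩ ⟨t, wk, htpos, ht0, hwk, hmemk⟩
  obtain ⟨K, hK⟩ := hlip
  have hPiZ : Pi (X + Y) = X := (hmem X Y).mp hXY
  have hDPiZH : DPi (X + Y) (F + G) = F := ((htan X Y F G hXY)).mp hFG
  have htpos' : Tendsto t atTop (𝓝[>] (0 : ℝ)) :=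
    tendsto_nhdsWithin_of_tendsto_nhds_of_eventually_within _ ht0
      (Filter.Eventually.of_forall htpos)
  set c : ℕ → ℝ := fun k => (t k) ^ 2 / 2 with hc_def
  have hc : ∀ k, 0 < c k := fun k => by
    have := htpos k; simp only [hc_def]; positivity
  set W : Matrix (Fin n) (Fin n) ℝ := S + T with hW
  set a : ℕ → Matrix (Fin n) (Fin n) ℝ := fun k =>
    (c k)⁻¹ • (Pi ((X + Y) + t k • (F + G) + c k • W) - X - t k • F) with ha
  -- the membership gives a formula for Pi at the perturbed points
  have key : ∀ k, Pi ((X + Y) + t k • (F + G) + c k • ((wk k).1 + (wk k).2))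
      = X + t k • F + c k • (wk k).1 := by
    intro k
    have h := hmemk k
    have h' : (X + t k • F + c k • (wk k).1, Y + t k • G + c k • (wk k).2)
        ∈ SDCCset n := by
      have : ((X, Y) : Matrix (Fin n) (Fin n) ℝ × Matrix (Fin n) (Fin n) ℝ)
          + t k • (F, G) + ((t k) ^ 2 / 2) • wk k
          = (X + t k • F + c k • (wk k).1, Y + t k • G + c k • (wk k).2) := by
        simp [Prod.ext_iff, hc_def]
      rwa [this] at h
    have heq := (hmem _ _).mp h'
    have harg : X + Y + t k • (F + G) + c k • ((wk k).1 + (wk k).2)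
        = X + t k • F + c k • (wk k).1 + (Y + t k • G + c k • (wk k).2) := by
      module
    rw [harg, heq]
  -- limit 1 : a → D2Pi
  have h1 : Tendsto a atTop (𝓝 (D2Pi (X + Y) (F + G) W)) := by
    have h2d := (hD2Pi (X + Y) (F + G) W).comp htpos'
    have : (fun s : ℝ =>
        (s ^ 2 / 2)⁻¹ • (Pi ((X + Y) + s • (F + G) + (s ^ 2 / 2) • W)
          - Pi (X + Y) - s • DPi (X + Y) (F + G))) ∘ t = a := by
      funext k
      simp only [Function.comp, ha, hc_def, hPiZ, hDPiZH]
    rwa [this] at h2d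
  -- limit 2 : a → S
  have h2 : Tendsto a atTop (𝓝 S) := by
    have herr : Tendsto (fun k => a k - (wk k).1) atTop (𝓝 0) := by
      have hbound : ∀ k, ‖a k - (wk k).1‖ ≤ K * ‖W - ((wk k).1 + (wk k).2)‖ := by
        intro k
        have hck := hc k
        have hA : a k - (wk k).1
            = (c k)⁻¹ • (Pi ((X + Y) + t k • (F + G) + c k • W)
              - Pi ((X + Y) + t k • (F + G) + c k • ((wk k).1 + (wk k).2))) := by
          rw [key k, ha]
          simp only
          have hcc : (c k)⁻¹ • (c k • (wk k).1) = (wk k).1 := by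
            rw [smul_smul, inv_mul_cancel₀ hck.ne', one_smul]
          rw [show Pi (X + Y + t k • (F + G) + c k • W)
              - (X + t k • F + c k • (wk k).1)
              = (Pi (X + Y + t k • (F + G) + c k • W) - X - t k • F)
                - c k • (wk k).1 by abel]
          simp only [smul_sub]
          rw [hcc]
        rw [hA, norm_smul, Real.norm_eq_abs, abs_of_pos (inv_pos.mpr hck)]
        have hLip := hK.dist_le_mul ((X + Y) + t k • (F + G) + c k • W)
          ((X + Y) + t k • (F + G) + c k • ((wk k).1 + (wk k).2))
        rw [dist_eq_norm, dist_eq_norm] at hLip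
        have hdiff : ((X + Y) + t k • (F + G) + c k • W)
            - ((X + Y) + t k • (F + G) + c k • ((wk k).1 + (wk k).2))
            = c k • (W - ((wk k).1 + (wk k).2)) := by module
        rw [hdiff, norm_smul, Real.norm_eq_abs, abs_of_pos hck] at hLip
        calc (c k)⁻¹ * ‖Pi ((X + Y) + t k • (F + G) + c k • W)
              - Pi ((X + Y) + t k • (F + G) + c k • ((wk k).1 + (wk k).2))‖
            ≤ (c k)⁻¹ * (K * (c k * ‖W - ((wk k).1 + (wk k).2)‖)) := by
              apply mul_le_mul_of_nonneg_left hLip (le_of_lt (inv_pos.mpr hck))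
          _ = K * ‖W - ((wk k).1 + (wk k).2)‖ := by
              field_simp
      have hWk : Tendsto (fun k => ((wk k).1 + (wk k).2)) atTop (𝓝 W) := by
        have h1' : Tendsto (fun k => (wk k).1) atTop (𝓝 S) :=
          (continuous_fst.tendsto _).comp hwk
        have h2' : Tendsto (fun k => (wk k).2) atTop (𝓝 T) :=
          (continuous_snd.tendsto _).comp hwk
        simpa [hW] using h1'.add h2'
      have hN : Tendsto (fun k => (K : ℝ) * ‖W - ((wk k).1 + (wk k).2)‖)
          atTop (𝓝 0) := by
        have : Tendsto (fun k => W - ((wk k).1 + (wk k).2)) atTop (𝓝 0) := by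
          simpa using (tendsto_const_nhds (x := W)).sub hWk
        have := this.norm
        simp only [norm_zero] at this
        simpa using this.const_mul (K : ℝ)
      have h0 : Tendsto (fun k => ‖a k - (wk k).1‖) atTop (𝓝 0) :=
        squeeze_zero (fun k => norm_nonneg _) hbound hN
      exact tendsto_zero_iff_norm_tendsto_zero.mpr h0
    have hfst : Tendsto (fun k => (wk k).1) atTop (𝓝 S) :=
      (continuous_fst.tendsto _).comp hwk
    have := herr.add hfst
    simpa using this
  exact tendsto_nhds_unique h1 h2
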